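/- For fixed real numbers z and u, the function f_z(u) = (1/(2π)) ∫_{-c}^{c} e^{-t²/2} sin(2t(z-u)) / t dt converges, as c → ∞, to (1/2) erf(√2 (z-u)). -/

import Mathlib

open Real Filter

/-- The error function `erf x = (2/√π) ∫_0^x e^{-s²} ds`. -/
noncomputable def erf (x : ℝ) : ℝ :=
  (2 / Real.sqrt Real.pi) * ∫ s in (0:ℝ)..x, Real.exp (-s ^ 2)

/-!
Since `sin (2ta) / t = ∫_0^{2a} cos (st) ds`, Fubini turns the full integral of the integrand
into `∫_0^{2a} ∫ e^{-t²/2} cos (st) dt ds`. The inner integral is the Fourier transform of a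
Gaussian, `√(2π) e^{-s²/2}`, and integrating that over `[0, 2a]` gives `π erf (√2 a)`.
The integrand is dominated by `2|a| e^{-t²/2}`, so the symmetric integrals over `[-c, c]`
converge to the full integral.
-/

open MeasureTheory

theorem integral_exp_neg_mul_sq_mul_cos {b : ℝ} (hb : 0 < b) (s : ℝ) :
    ∫ t : ℝ, exp (-b * t ^ 2) * cos (s * t) = √(π / b) * exp (-s ^ 2 / (4 * b)) := by
  have hb' : 0 < (b : ℂ).re := by simpa using hb
  have hre (t : ℝ) : exp (-b * t ^ 2) * cos (s * t)
      = (Complex.exp (Complex.I * s * t) * Complex.exp (-b * t ^ 2)).re := by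
    rw [show Complex.exp (Complex.I * s * t) * Complex.exp (-b * t ^ 2)
        = (exp (-b * t ^ 2) : ℂ) * Complex.exp ((s * t : ℝ) * Complex.I) by
      push_cast; ring_nf, Complex.re_ofReal_mul, Complex.exp_ofReal_mul_I_re]
  have hint : Integrable fun t : ℝ => Complex.exp (Complex.I * s * t) * Complex.exp (-b * t ^ 2) :=
    (integrable_cexp_quadratic hb' (Complex.I * s) 0).congr <| .of_forall fun t => by
      simp only [← Complex.exp_add]; ring_nf
  have hsqrt : ((π / b : ℝ) : ℂ) ^ (1 / 2 : ℂ) = (√(π / b) : ℝ) := by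
    rw [sqrt_eq_rpow, Complex.ofReal_cpow (by positivity)]
    push_cast; rfl
  simp_rw [hre, ← Complex.reCLM_apply, Complex.reCLM.integral_comp_comm hint, Complex.reCLM_apply,
    fourierIntegral_gaussian hb', ← Complex.ofReal_div, hsqrt, Complex.re_ofReal_mul]
  norm_cast

theorem integral_exp_neg_mul_sq_eq_erf {b : ℝ} (hb : 0 < b) (x : ℝ) :
    ∫ s in 0..x, exp (-b * s ^ 2) = √(π / b) / 2 * erf (√b * x) := by
  have hsb : √b ≠ 0 := by positivity
  have h := intervalIntegral.integral_comp_mul_left (fun r => exp (-r ^ 2)) (a := 0) (b := x) hsb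
  simp only [mul_pow, sq_sqrt hb.le, mul_zero] at h
  simp_rw [neg_mul]
  rw [h, erf, sqrt_div' _ hb.le, smul_eq_mul]
  field_simp

noncomputable def gaussSinc (a t : ℝ) : ℝ :=
  if t = 0 then 2 * a else exp (-t ^ 2 / 2) * sin (2 * t * a) / t

theorem gaussSinc_eq_integral_cos (a t : ℝ) :
    gaussSinc a t = ∫ s in 0..2 * a, exp (-t ^ 2 / 2) * cos (s * t) := by
  rw [intervalIntegral.integral_const_mul, gaussSinc]
  split_ifs with ht
  · simp [ht]
  · rw [intervalIntegral.integral_comp_mul_right (fun s => cos s) ht, integral_cos, zero_mul,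
      sin_zero, sub_zero, smul_eq_mul]
    field_simp

theorem norm_exp_mul_cos_le (s t : ℝ) : ‖exp (-t ^ 2 / 2) * cos (s * t)‖ ≤ exp (-t ^ 2 / 2) := by
  rw [norm_mul, norm_of_nonneg (exp_pos _).le]
  exact mul_le_of_le_one_right (exp_pos _).le (abs_cos_le_one _)

theorem continuous_gaussSinc (a : ℝ) : Continuous (gaussSinc a) := by
  simp_rw [funext (gaussSinc_eq_integral_cos a)]
  exact intervalIntegral.continuous_parametric_intervalIntegral_of_continuous' (by fun_prop) _ _

theorem integrable_gaussSinc (a : ℝ) : Integrable (gaussSinc a) := by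
  refine Integrable.mono' ((integrable_exp_neg_mul_sq one_half_pos).const_mul |2 * a|)
    (continuous_gaussSinc a).aestronglyMeasurable (.of_forall fun t => ?_)
  rw [gaussSinc_eq_integral_cos]
  refine (intervalIntegral.norm_integral_le_of_norm_le_const
    fun s _ => norm_exp_mul_cos_le s t).trans_eq ?_
  rw [sub_zero]; ring_nf

theorem integral_gaussSinc (a : ℝ) : ∫ t, gaussSinc a t = π * erf (√2 * a) := by
  have hexp (t : ℝ) : exp (-t ^ 2 / 2) = exp (-(1 / 2) * t ^ 2) := by ring_nf
  have : IsFiniteMeasure (volume.restrict (Set.uIoc 0 (2 * a))) := by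
    rw [Set.uIoc]; infer_instance
  have hswap : Integrable (Function.uncurry fun s t : ℝ => exp (-t ^ 2 / 2) * cos (s * t))
      ((volume.restrict (Set.uIoc 0 (2 * a))).prod volume) := by
    refine ((integrable_const (1 : ℝ)).mul_prod (integrable_exp_neg_mul_sq one_half_pos)).mono'
      (by fun_prop) (.of_forall fun p => ?_)
    rw [one_mul, ← hexp]
    exact norm_exp_mul_cos_le p.1 p.2
  have hscale : √(1 / 2) * (2 * a) = √2 * a := by
    rw [sqrt_div' _ zero_le_two, sqrt_one]
    field_simp
    rw [sq_sqrt zero_le_two]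
  calc ∫ t, gaussSinc a t
      = ∫ s in 0..2 * a, ∫ t, exp (-t ^ 2 / 2) * cos (s * t) := by
        simp_rw [gaussSinc_eq_integral_cos, intervalIntegral_integral_swap hswap]
    _ = ∫ s in 0..2 * a, √(2 * π) * exp (-(1 / 2) * s ^ 2) := by
        simp_rw [hexp, integral_exp_neg_mul_sq_mul_cos one_half_pos]
        ring_nf
    _ = π * erf (√2 * a) := by
        rw [intervalIntegral.integral_const_mul, integral_exp_neg_mul_sq_eq_erf one_half_pos,
          hscale, show π / (1 / 2) = 2 * π by ring, ← mul_assoc, ← mul_div_assoc,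
          mul_self_sqrt (by positivity)]
        ring

/-- As `c → ∞`, `(1/(2π)) ∫_{-c}^{c} e^{-t²/2} sin(2t(z-u))/t dt → (1/2) erf(√2 (z-u))`,
the integrand being extended continuously at `t = 0` by its limit `2(z-u)`. -/
theorem stmt_0 (z u : ℝ) :
    Tendsto (fun c : ℝ =>
        (1 / (2 * Real.pi)) * ∫ t in (-c)..c,
          (if t = 0 then 2 * (z - u)
           else Real.exp (-t ^ 2 / 2) * Real.sin (2 * t * (z - u)) / t))
      atTop (nhds ((1 / 2) * erf (Real.sqrt 2 * (z - u)))) := by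
  have h := (intervalIntegral_tendsto_integral (integrable_gaussSinc (z - u))
    tendsto_neg_atTop_atBot tendsto_id).const_mul (1 / (2 * π))
  rwa [integral_gaussSinc, show 1 / (2 * π) * (π * erf (√2 * (z - u))) = 1 / 2 * erf (√2 * (z - u))
    by field_simp] at h
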